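/- For every n ≥ 1, using the combinatorial (FB-configuration) model of faithfully balanced Λ_n-modules with exactly n summands and the order N ⊴ M iff cogen(N) ⊆ cogen(M) and gen(N) ⊇ gen(M): the resulting finite poset has a least element (corresponding to Λ_n, given by the set of projectives) and a greatest element (the injectives), and any two elements have a meet; hence it is a lattice. -/
import Mathlib


/-- The index set `I_n = {(i,j) : 1 ≤ i ≤ j ≤ n}` of indecomposable `Λ_n`-modules. -/
def indexSet (n : ℕ) : Finset (ℕ × ℕ) :=
  (Finset.Icc 1 n ×ˢ Finset.Icc 1 n).filter (fun p => p.1 ≤ p.2)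

/-- The cohook of `(i,j)`: `{(k,j) : 1 ≤ k < i} ∪ {(i,ℓ) : j < ℓ ≤ n}`. -/
def cohook (n i j : ℕ) : Finset (ℕ × ℕ) :=
  (Finset.Icc 1 n ×ˢ Finset.Icc 1 n).filter
    (fun p => (p.2 = j ∧ p.1 < i) ∨ (p.1 = i ∧ j < p.2))

/-- `S ⊆ I_n` is an FB-configuration (a basic faithfully balanced `Λ_n`-module). -/
def IsFB (n : ℕ) (S : Finset (ℕ × ℕ)) : Prop :=
  (1, n) ∈ S ∧
  (∀ p ∈ S, p ≠ (1, n) → (cohook n p.1 p.2 ∩ S).Nonempty) ∧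
  (∀ k ∈ Finset.Icc 2 n, (cohook n k (k - 1) ∩ S).Nonempty)

instance (n : ℕ) : DecidablePred (IsFB n) := fun S => by
  unfold IsFB; infer_instance

/-- `fb(n)`: FB-configurations of cardinality exactly `n`, i.e. basic faithfully
balanced `Λ_n`-modules with exactly `n` indecomposable summands. -/
def fbn (n : ℕ) : Finset (Finset (ℕ × ℕ)) :=
  (indexSet n).powerset.filter (fun S => IsFB n S ∧ S.card = n)

/-- The set of indecomposables generated by (the module with summand set) `S`:
the quotients `(i,ℓ)`, `i ≤ ℓ ≤ j`, of the summands `(i,j) ∈ S`. -/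
def genSet (n : ℕ) (S : Finset (ℕ × ℕ)) : Finset (ℕ × ℕ) :=
  (indexSet n).filter (fun p => ∃ q ∈ S, q.1 = p.1 ∧ p.2 ≤ q.2)

/-- The set of indecomposables cogenerated by `S`:
the submodules `(k,j)`, `i ≤ k ≤ j`, of the summands `(i,j) ∈ S`. -/
def cogenSet (n : ℕ) (S : Finset (ℕ × ℕ)) : Finset (ℕ × ℕ) :=
  (indexSet n).filter (fun p => ∃ q ∈ S, q.2 = p.2 ∧ q.1 ≤ p.1)

/-- The order `N ⊴ M` iff `cogen(N) ⊆ cogen(M)` and `gen(N) ⊇ gen(M)`. -/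
def fbLE (n : ℕ) (S T : Finset (ℕ × ℕ)) : Prop :=
  cogenSet n S ⊆ cogenSet n T ∧ genSet n T ⊆ genSet n S

-- basic membership lemmas
lemma mem_indexSet {n : ℕ} {p : ℕ × ℕ} :
    p ∈ indexSet n ↔ 1 ≤ p.1 ∧ p.1 ≤ p.2 ∧ p.2 ≤ n := by
  simp only [indexSet, Finset.mem_filter, Finset.mem_product, Finset.mem_Icc]
  omega

lemma mem_cohook {n i j : ℕ} {p : ℕ × ℕ} :
    p ∈ cohook n i j ↔ (1 ≤ p.1 ∧ p.1 ≤ n ∧ 1 ≤ p.2 ∧ p.2 ≤ n) ∧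
      ((p.2 = j ∧ p.1 < i) ∨ (p.1 = i ∧ j < p.2)) := by
  simp only [cohook, Finset.mem_filter, Finset.mem_product, Finset.mem_Icc]
  tauto

lemma mem_fbn {n : ℕ} {S : Finset (ℕ × ℕ)} :
    S ∈ fbn n ↔ S ⊆ indexSet n ∧ IsFB n S ∧ S.card = n := by
  simp [fbn, Finset.mem_filter, Finset.mem_powerset, and_assoc]

lemma mem_genSet {n : ℕ} {S : Finset (ℕ × ℕ)} {p : ℕ × ℕ} :
    p ∈ genSet n S ↔ p ∈ indexSet n ∧ ∃ q ∈ S, q.1 = p.1 ∧ p.2 ≤ q.2 := by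
  simp [genSet, Finset.mem_filter]

lemma mem_cogenSet {n : ℕ} {S : Finset (ℕ × ℕ)} {p : ℕ × ℕ} :
    p ∈ cogenSet n S ↔ p ∈ indexSet n ∧ ∃ q ∈ S, q.2 = p.2 ∧ q.1 ≤ p.1 := by
  simp [cogenSet, Finset.mem_filter]

lemma genSet_subset_iff {n : ℕ} {S' S : Finset (ℕ × ℕ)} (hS' : S' ⊆ indexSet n) :
    genSet n S' ⊆ genSet n S ↔ ∀ p ∈ S', ∃ q ∈ S, q.1 = p.1 ∧ p.2 ≤ q.2 := by
  constructor
  · intro h p hp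
    have : p ∈ genSet n S := h (mem_genSet.2 ⟨hS' hp, p, hp, rfl, le_rfl⟩)
    exact (mem_genSet.1 this).2
  · intro h x hx
    rcases mem_genSet.1 hx with ⟨hxi, q, hq, hq1, hq2⟩
    rcases h q hq with ⟨r, hr, hr1, hr2⟩
    exact mem_genSet.2 ⟨hxi, r, hr, hr1.trans hq1, hq2.trans hr2⟩

lemma cogenSet_subset_iff {n : ℕ} {S' S : Finset (ℕ × ℕ)} (hS' : S' ⊆ indexSet n) :
    cogenSet n S' ⊆ cogenSet n S ↔ ∀ p ∈ S', ∃ q ∈ S, q.2 = p.2 ∧ q.1 ≤ p.1 := by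
  constructor
  · intro h p hp
    have : p ∈ cogenSet n S := h (mem_cogenSet.2 ⟨hS' hp, p, hp, rfl, le_rfl⟩)
    exact (mem_cogenSet.1 this).2
  · intro h x hx
    rcases mem_cogenSet.1 hx with ⟨hxi, q, hq, hq1, hq2⟩
    rcases h q hq with ⟨r, hr, hr1, hr2⟩
    exact mem_cogenSet.2 ⟨hxi, r, hr, hr1.trans hq1, hr2.trans hq2⟩

lemma fbLE_iff {n : ℕ} {S T : Finset (ℕ × ℕ)} (hS : S ⊆ indexSet n) (hT : T ⊆ indexSet n) :
    fbLE n S T ↔ (∀ p ∈ S, ∃ q ∈ T, q.2 = p.2 ∧ q.1 ≤ p.1) ∧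
      (∀ p ∈ T, ∃ q ∈ S, q.1 = p.1 ∧ p.2 ≤ q.2) := by
  unfold fbLE
  rw [cogenSet_subset_iff hS, genSet_subset_iff hT]

/-- Structure theorem for FB configurations with exactly `n` summands:
every element is a row maximum or a column minimum, and for `2 ≤ i ≤ n`,
row `i` is nonempty iff column `i-1` is empty. -/
theorem fbn_struct {n : ℕ} (hn : 0 < n) {X : Finset (ℕ × ℕ)} (hX : X ∈ fbn n) :
    (∀ p ∈ X, (∀ q ∈ X, q.1 = p.1 → q.2 ≤ p.2) ∨ (∀ q ∈ X, q.2 = p.2 → p.1 ≤ q.1)) ∧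
    (∀ i, 2 ≤ i → i ≤ n → ((∃ p ∈ X, p.1 = i) ↔ ¬ ∃ p ∈ X, p.2 = i - 1)) := by
  classical
  obtain ⟨hsub, hfb, hcard⟩ := mem_fbn.1 hX
  obtain ⟨h1n, hco, hc3⟩ := hfb
  set RM := X.filter (fun p => ∀ q ∈ X, q.1 = p.1 → q.2 ≤ p.2) with hRM
  set CM := X.filter (fun p => ∀ q ∈ X, q.2 = p.2 → p.1 ≤ q.1) with hCM
  set R := X.image Prod.fst with hR
  set C := X.image Prod.snd with hC
  -- RM.image fst = R
  have hRMim : RM.image Prod.fst = R := by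
    apply Finset.Subset.antisymm
    · exact Finset.image_subset_image (Finset.filter_subset _ _)
    · intro i hi
      rcases Finset.mem_image.1 hi with ⟨p, hp, hpi⟩
      have hne : (X.filter (fun q => q.1 = i)).Nonempty := ⟨p, Finset.mem_filter.2 ⟨hp, hpi⟩⟩
      obtain ⟨b, hb, hbmax⟩ := Finset.exists_max_image (X.filter (fun q => q.1 = i)) Prod.snd hne
      rcases Finset.mem_filter.1 hb with ⟨hbX, hb1⟩
      refine Finset.mem_image.2 ⟨b, Finset.mem_filter.2 ⟨hbX, ?_⟩, hb1⟩
      intro q hq hq1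
      exact hbmax q (Finset.mem_filter.2 ⟨hq, by rw [hq1, hb1]⟩)
  have hCMim : CM.image Prod.snd = C := by
    apply Finset.Subset.antisymm
    · exact Finset.image_subset_image (Finset.filter_subset _ _)
    · intro j hj
      rcases Finset.mem_image.1 hj with ⟨p, hp, hpj⟩
      have hne : (X.filter (fun q => q.2 = j)).Nonempty := ⟨p, Finset.mem_filter.2 ⟨hp, hpj⟩⟩
      obtain ⟨b, hb, hbmin⟩ := Finset.exists_min_image (X.filter (fun q => q.2 = j)) Prod.fst hne
      rcases Finset.mem_filter.1 hb with ⟨hbX, hb2⟩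
      refine Finset.mem_image.2 ⟨b, Finset.mem_filter.2 ⟨hbX, ?_⟩, hb2⟩
      intro q hq hq2
      exact hbmin q (Finset.mem_filter.2 ⟨hq, by rw [hq2, hb2]⟩)
  have hRMinj : Set.InjOn Prod.fst (RM : Set (ℕ × ℕ)) := by
    intro p hp q hq hpq
    rw [Finset.mem_coe, hRM, Finset.mem_filter] at hp hq
    have h1 := hq.2 p hp.1 hpq
    have h2 := hp.2 q hq.1 hpq.symm
    exact Prod.ext hpq (le_antisymm h1 h2)
  have hCMinj : Set.InjOn Prod.snd (CM : Set (ℕ × ℕ)) := by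
    intro p hp q hq hpq
    rw [Finset.mem_coe, hCM, Finset.mem_filter] at hp hq
    have h1 := hq.2 p hp.1 hpq
    have h2 := hp.2 q hq.1 hpq.symm
    exact Prod.ext (le_antisymm h2 h1) hpq
  have hRMcard : RM.card = R.card := by rw [← hRMim, Finset.card_image_of_injOn hRMinj]
  have hCMcard : CM.card = C.card := by rw [← hCMim, Finset.card_image_of_injOn hCMinj]
  -- RM ∩ CM = {(1,n)}
  have hinter : RM ∩ CM = {(1, n)} := by
    apply Finset.Subset.antisymm
    · intro p hp
      rcases Finset.mem_inter.1 hp with ⟨hpr, hpc⟩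
      rcases Finset.mem_filter.1 hpr with ⟨hpX, hprm⟩
      rcases Finset.mem_filter.1 hpc with ⟨-, hpcm⟩
      by_contra hne
      have hne' : p ≠ (1, n) := by simpa using hne
      obtain ⟨w, hw⟩ := hco p hpX hne'
      rcases Finset.mem_inter.1 hw with ⟨hwc, hwX⟩
      rcases (mem_cohook.1 hwc).2 with ⟨h2, h1⟩ | ⟨h1, h2⟩
      · exact absurd (hpcm w hwX h2) (by omega)
      · exact absurd (hprm w hwX h1) (by omega)
    · intro p hp
      rw [Finset.mem_singleton] at hp
      subst hp
      refine Finset.mem_inter.2 ⟨Finset.mem_filter.2 ⟨h1n, ?_⟩, Finset.mem_filter.2 ⟨h1n, ?_⟩⟩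
      · intro q hq _; exact (mem_indexSet.1 (hsub hq)).2.2
      · intro q hq _; exact (mem_indexSet.1 (hsub hq)).1
  -- Icc 1 (n+1) ⊆ R ∪ C.image (·+1)
  have hcover : Finset.Icc 1 (n + 1) ⊆ R ∪ C.image (· + 1) := by
    intro k hk
    rw [Finset.mem_Icc] at hk
    rcases Nat.lt_or_ge k 2 with hk2 | hk2
    · have hk1 : k = 1 := by omega
      subst hk1
      exact Finset.mem_union_left _ (Finset.mem_image.2 ⟨(1, n), h1n, rfl⟩)
    rcases Nat.lt_or_ge k (n + 1) with hkn | hkn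
    · obtain ⟨w, hw⟩ := hc3 k (Finset.mem_Icc.2 ⟨hk2, by omega⟩)
      rcases Finset.mem_inter.1 hw with ⟨hwc, hwX⟩
      rcases (mem_cohook.1 hwc).2 with ⟨h2, h1⟩ | ⟨h1, h2⟩
      · refine Finset.mem_union_right _ (Finset.mem_image.2 ⟨w.2, ?_, by omega⟩)
        exact Finset.mem_image.2 ⟨w, hwX, rfl⟩
      · exact Finset.mem_union_left _ (Finset.mem_image.2 ⟨w, hwX, h1⟩)
    · have hkn1 : k = n + 1 := by omega
      subst hkn1
      refine Finset.mem_union_right _ (Finset.mem_image.2 ⟨n, ?_, rfl⟩)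
      exact Finset.mem_image.2 ⟨(1, n), h1n, rfl⟩
  have hC'card : (C.image (· + 1)).card = C.card :=
    Finset.card_image_of_injective _ (fun a b h => by omega)
  have hucard : (R ∪ C.image (· + 1)).card ≤ R.card + C.card :=
    le_trans (Finset.card_union_le _ _) (by omega)
  have hcov : n + 1 ≤ (R ∪ C.image (· + 1)).card := by
    have := Finset.card_le_card hcover
    simpa using this
  have hRMCM : (RM ∪ CM).card + 1 = RM.card + CM.card := by
    have := Finset.card_union_add_card_inter RM CM
    rw [hinter] at this
    simpa using this
  have hunX : RM ∪ CM ⊆ X :=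
    Finset.union_subset (Finset.filter_subset _ _) (Finset.filter_subset _ _)
  have hunle : (RM ∪ CM).card ≤ n := hcard ▸ Finset.card_le_card hunX
  -- equalities
  have hXeq : RM ∪ CM = X := by
    apply Finset.eq_of_subset_of_card_le hunX
    omega
  -- disjointness of R and C.image (·+1)
  have hdisj : R ∩ C.image (· + 1) = ∅ := by
    have hsub' : R ∪ C.image (· + 1) ⊆ Finset.Icc 1 (n + 1) := by
      intro k hk
      rcases Finset.mem_union.1 hk with hk | hk
      · rcases Finset.mem_image.1 hk with ⟨p, hp, hpk⟩
        have := mem_indexSet.1 (hsub hp)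
        rw [Finset.mem_Icc]; omega
      · rcases Finset.mem_image.1 hk with ⟨j, hj, hjk⟩
        rcases Finset.mem_image.1 hj with ⟨p, hp, hpj⟩
        have := mem_indexSet.1 (hsub hp)
        rw [Finset.mem_Icc]; omega
    have hle : (R ∪ C.image (· + 1)).card ≤ n + 1 := by
      have := Finset.card_le_card hsub'
      simpa using this
    have := Finset.card_union_add_card_inter R (C.image (· + 1))
    have hz : (R ∩ C.image (· + 1)).card = 0 := by omega
    exact Finset.card_eq_zero.1 hz
  constructor
  · intro p hp
    have : p ∈ RM ∪ CM := hXeq ▸ hp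
    rcases Finset.mem_union.1 this with h | h
    · exact Or.inl (Finset.mem_filter.1 h).2
    · exact Or.inr (Finset.mem_filter.1 h).2
  · intro i hi2 hin
    constructor
    · rintro ⟨p, hp, hpi⟩ ⟨q, hq, hqi⟩
      have hiR : i ∈ R := Finset.mem_image.2 ⟨p, hp, hpi⟩
      have hiC' : i ∈ C.image (· + 1) := by
        refine Finset.mem_image.2 ⟨i - 1, Finset.mem_image.2 ⟨q, hq, hqi⟩, by omega⟩
      have : i ∈ R ∩ C.image (· + 1) := Finset.mem_inter.2 ⟨hiR, hiC'⟩
      rw [hdisj] at this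
      exact absurd this (Finset.notMem_empty _)
    · intro hnc
      have hik : i ∈ Finset.Icc 1 (n + 1) := Finset.mem_Icc.2 ⟨by omega, by omega⟩
      rcases Finset.mem_union.1 (hcover hik) with h | h
      · rcases Finset.mem_image.1 h with ⟨p, hp, hpi⟩
        exact ⟨p, hp, hpi⟩
      · exfalso
        rcases Finset.mem_image.1 h with ⟨j, hj, hji⟩
        rcases Finset.mem_image.1 hj with ⟨q, hq, hqj⟩
        exact hnc ⟨q, hq, by omega⟩

theorem fbn_antisymm {n : ℕ} (hn : 0 < n) {S T : Finset (ℕ × ℕ)}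
    (hS : S ∈ fbn n) (hT : T ∈ fbn n) (h1 : fbLE n S T) (h2 : fbLE n T S) : S = T := by
  obtain ⟨hSsub, -, -⟩ := mem_fbn.1 hS
  obtain ⟨hTsub, -, -⟩ := mem_fbn.1 hT
  obtain ⟨hco1, hgen1⟩ := (fbLE_iff hSsub hTsub).1 h1
  obtain ⟨hco2, hgen2⟩ := (fbLE_iff hTsub hSsub).1 h2
  have key : ∀ U V : Finset (ℕ × ℕ), U ∈ fbn n →
      (∀ p ∈ U, ∃ q ∈ V, q.2 = p.2 ∧ q.1 ≤ p.1) →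
      (∀ p ∈ V, ∃ q ∈ U, q.1 = p.1 ∧ p.2 ≤ q.2) →
      (∀ p ∈ V, ∃ q ∈ U, q.2 = p.2 ∧ q.1 ≤ p.1) →
      (∀ p ∈ U, ∃ q ∈ V, q.1 = p.1 ∧ p.2 ≤ q.2) → U ⊆ V := by
    intro U V hU hcoUV hgenVU hcoVU hgenUV p hp
    rcases (fbn_struct hn hU).1 p hp with hrm | hcm
    · rcases hgenUV p hp with ⟨q, hq, hq1, hq2⟩
      rcases hgenVU q hq with ⟨r, hr, hr1, hr2⟩
      have : r.2 ≤ p.2 := hrm r hr (by omega)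
      have hq2' : q.2 = p.2 := by omega
      have : q = p := Prod.ext hq1 hq2'
      exact this ▸ hq
    · rcases hcoUV p hp with ⟨q, hq, hq2, hq1⟩
      rcases hcoVU q hq with ⟨r, hr, hr2, hr1⟩
      have : p.1 ≤ r.1 := hcm r hr (by omega)
      have hq1' : q.1 = p.1 := by omega
      have : q = p := Prod.ext hq1' hq2
      exact this ▸ hq
  exact Finset.Subset.antisymm
    (key S T hS hco1 hgen1 hco2 hgen2) (key T S hT hco2 hgen2 hco1 hgen1)

theorem proj_mem_fbn {n : ℕ} (hn : 0 < n) :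
    (indexSet n).filter (fun p => p.2 = n) ∈ fbn n := by
  classical
  have heq : (indexSet n).filter (fun p => p.2 = n)
      = (Finset.Icc 1 n).image (fun i => (i, n)) := by
    ext p
    simp only [Finset.mem_filter, Finset.mem_image, Finset.mem_Icc, mem_indexSet]
    constructor
    · rintro ⟨⟨h1, h2, h3⟩, h4⟩
      exact ⟨p.1, ⟨h1, by omega⟩, by rw [← h4]⟩
    · rintro ⟨i, ⟨hi1, hi2⟩, rfl⟩
      exact ⟨⟨hi1, hi2, le_rfl⟩, rfl⟩
  refine mem_fbn.2 ⟨Finset.filter_subset _ _, ⟨?_, ?_, ?_⟩, ?_⟩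
  · exact Finset.mem_filter.2 ⟨mem_indexSet.2 ⟨le_rfl, hn, le_rfl⟩, rfl⟩
  · intro p hp hpne
    rcases Finset.mem_filter.1 hp with ⟨hpi, hp2⟩
    have hpix := mem_indexSet.1 hpi
    have hp1 : 2 ≤ p.1 := by
      rcases Nat.lt_or_ge p.1 2 with h | h
      · exfalso; exact hpne (Prod.ext (by omega) hp2)
      · exact h
    refine ⟨(1, n), Finset.mem_inter.2 ⟨mem_cohook.2 ⟨⟨le_rfl, hn, hn, le_rfl⟩, ?_⟩, ?_⟩⟩
    · left; exact ⟨hp2.symm, by omega⟩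
    · exact Finset.mem_filter.2 ⟨mem_indexSet.2 ⟨le_rfl, hn, le_rfl⟩, rfl⟩
  · intro k hk
    rw [Finset.mem_Icc] at hk
    refine ⟨(k, n), Finset.mem_inter.2 ⟨mem_cohook.2 ⟨⟨by omega, by omega, hn, le_rfl⟩, ?_⟩, ?_⟩⟩
    · right; exact ⟨rfl, by omega⟩
    · exact Finset.mem_filter.2 ⟨mem_indexSet.2 ⟨by omega, by omega, le_rfl⟩, rfl⟩
  · rw [heq, Finset.card_image_of_injective _ (fun a b h => by injection h), Nat.card_Icc]; omega

theorem inj_mem_fbn {n : ℕ} (hn : 0 < n) :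
    (indexSet n).filter (fun p => p.1 = 1) ∈ fbn n := by
  classical
  have heq : (indexSet n).filter (fun p => p.1 = 1)
      = (Finset.Icc 1 n).image (fun j => (1, j)) := by
    ext p
    simp only [Finset.mem_filter, Finset.mem_image, Finset.mem_Icc, mem_indexSet]
    constructor
    · rintro ⟨⟨h1, h2, h3⟩, h4⟩
      exact ⟨p.2, ⟨by omega, h3⟩, by rw [← h4]⟩
    · rintro ⟨j, ⟨hj1, hj2⟩, rfl⟩
      exact ⟨⟨le_rfl, hj1, hj2⟩, rfl⟩
  refine mem_fbn.2 ⟨Finset.filter_subset _ _, ⟨?_, ?_, ?_⟩, ?_⟩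
  · exact Finset.mem_filter.2 ⟨mem_indexSet.2 ⟨le_rfl, hn, le_rfl⟩, rfl⟩
  · intro p hp hpne
    rcases Finset.mem_filter.1 hp with ⟨hpi, hp1⟩
    have hpix := mem_indexSet.1 hpi
    have hp2 : p.2 < n := by
      rcases Nat.lt_or_ge p.2 n with h | h
      · exact h
      · exfalso; exact hpne (Prod.ext hp1 (by omega))
    refine ⟨(1, n), Finset.mem_inter.2 ⟨mem_cohook.2 ⟨⟨le_rfl, hn, hn, le_rfl⟩, ?_⟩, ?_⟩⟩
    · right; exact ⟨hp1.symm, by omega⟩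
    · exact Finset.mem_filter.2 ⟨mem_indexSet.2 ⟨le_rfl, hn, le_rfl⟩, rfl⟩
  · intro k hk
    rw [Finset.mem_Icc] at hk
    refine ⟨(1, k - 1), Finset.mem_inter.2 ⟨mem_cohook.2 ⟨⟨le_rfl, by omega, by omega, by omega⟩, ?_⟩, ?_⟩⟩
    · left; exact ⟨rfl, by omega⟩
    · exact Finset.mem_filter.2 ⟨mem_indexSet.2 ⟨le_rfl, by omega, by omega⟩, rfl⟩
  · rw [heq, Finset.card_image_of_injective _ (fun a b h => by injection h), Nat.card_Icc]; omega

theorem proj_le {n : ℕ} (hn : 0 < n) {S : Finset (ℕ × ℕ)} (hS : S ∈ fbn n) :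
    fbLE n ((indexSet n).filter (fun p => p.2 = n)) S := by
  obtain ⟨hSsub, hfb, -⟩ := mem_fbn.1 hS
  refine (fbLE_iff (Finset.filter_subset _ _) hSsub).2 ⟨?_, ?_⟩
  · intro p hp
    rcases Finset.mem_filter.1 hp with ⟨hpi, hp2⟩
    exact ⟨(1, n), hfb.1, by simpa using hp2.symm, (mem_indexSet.1 hpi).1⟩
  · intro p hp
    have hpi := mem_indexSet.1 (hSsub hp)
    refine ⟨(p.1, n), Finset.mem_filter.2 ⟨mem_indexSet.2 ⟨hpi.1, by omega, le_rfl⟩, rfl⟩, rfl, by omega⟩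

theorem inj_ge {n : ℕ} (hn : 0 < n) {S : Finset (ℕ × ℕ)} (hS : S ∈ fbn n) :
    fbLE n S ((indexSet n).filter (fun p => p.1 = 1)) := by
  obtain ⟨hSsub, hfb, -⟩ := mem_fbn.1 hS
  refine (fbLE_iff hSsub (Finset.filter_subset _ _)).2 ⟨?_, ?_⟩
  · intro p hp
    have hpi := mem_indexSet.1 (hSsub hp)
    refine ⟨(1, p.2), Finset.mem_filter.2 ⟨mem_indexSet.2 ⟨le_rfl, by omega, by omega⟩, rfl⟩, rfl, hpi.1⟩
  · intro p hp
    rcases Finset.mem_filter.1 hp with ⟨hpi, hp1⟩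
    exact ⟨(1, n), hfb.1, by simpa using hp1.symm, (mem_indexSet.1 hpi).2.2⟩

def IsColMinP (X : Finset (ℕ × ℕ)) (p : ℕ × ℕ) : Prop :=
  p ∈ X ∧ ∀ q ∈ X, q.2 = p.2 → p.1 ≤ q.1

def GammaPt (S T : Finset (ℕ × ℕ)) (p : ℕ × ℕ) : Prop :=
  (IsColMinP S p ∨ IsColMinP T p) ∧
  (∃ q ∈ S, q.2 = p.2 ∧ q.1 ≤ p.1) ∧ (∃ q ∈ T, q.2 = p.2 ∧ q.1 ≤ p.1)

open scoped Classical in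
noncomputable def DSet (n : ℕ) (S T : Finset (ℕ × ℕ)) (i : ℕ) : Finset ℕ :=
  (Finset.Icc 1 n).filter (fun j =>
    (∃ k, GammaPt S T (k, j) ∧ k < i) ∧ i ≤ j ∧
    (∀ q ∈ S, q.1 = i → q.2 ≤ j) ∧ (∀ q ∈ T, q.1 = i → q.2 ≤ j) ∧
    (∀ j', GammaPt S T (i, j') → j' < j))

def RowPt (n : ℕ) (S T : Finset (ℕ × ℕ)) (p : ℕ × ℕ) : Prop :=
  2 ≤ p.1 ∧ (∀ k, ¬ GammaPt S T (k, p.1 - 1)) ∧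
  p.2 ∈ DSet n S T p.1 ∧ ∀ j ∈ DSet n S T p.1, p.2 ≤ j

open scoped Classical in
noncomputable def meetSet (n : ℕ) (S T : Finset (ℕ × ℕ)) : Finset (ℕ × ℕ) :=
  (indexSet n).filter (fun p => GammaPt S T p ∨ RowPt n S T p)

lemma mem_DSet {n : ℕ} {S T : Finset (ℕ × ℕ)} {i j : ℕ} :
    j ∈ DSet n S T i ↔ (1 ≤ j ∧ j ≤ n) ∧
      (∃ k, GammaPt S T (k, j) ∧ k < i) ∧ i ≤ j ∧
      (∀ q ∈ S, q.1 = i → q.2 ≤ j) ∧ (∀ q ∈ T, q.1 = i → q.2 ≤ j) ∧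
      (∀ j', GammaPt S T (i, j') → j' < j) := by
  classical
  simp [DSet, Finset.mem_filter, Finset.mem_Icc]

lemma mem_meetSet {n : ℕ} {S T : Finset (ℕ × ℕ)} {p : ℕ × ℕ} :
    p ∈ meetSet n S T ↔ p ∈ indexSet n ∧ (GammaPt S T p ∨ RowPt n S T p) := by
  classical
  simp [meetSet, Finset.mem_filter]

lemma gamma_mem_union {S T : Finset (ℕ × ℕ)} {p : ℕ × ℕ} (h : GammaPt S T p) :
    p ∈ S ∨ p ∈ T := by
  rcases h.1 with h' | h'
  · exact Or.inl h'.1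
  · exact Or.inr h'.1

lemma gamma_unique {S T : Finset (ℕ × ℕ)} {p p' : ℕ × ℕ}
    (h : GammaPt S T p) (h' : GammaPt S T p') (hc : p.2 = p'.2) : p.1 = p'.1 := by
  have key : ∀ r r' : ℕ × ℕ, GammaPt S T r → GammaPt S T r' → r.2 = r'.2 → r.1 ≤ r'.1 := by
    intro r r' hr hr' hrc
    rcases hr.1 with hm | hm
    · rcases hr'.2.1 with ⟨q, hq, hq2, hq1⟩
      exact le_trans (hm.2 q hq (by omega)) hq1
    · rcases hr'.2.2 with ⟨q, hq, hq2, hq1⟩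
      exact le_trans (hm.2 q hq (by omega)) hq1
  exact le_antisymm (key p p' h h' hc) (key p' p h' h hc.symm)

lemma gamma_exists {S T : Finset (ℕ × ℕ)} {j a : ℕ}
    (hS : ∃ q ∈ S, q.2 = j ∧ q.1 ≤ a) (hT : ∃ q ∈ T, q.2 = j ∧ q.1 ≤ a) :
    ∃ k ≤ a, GammaPt S T (k, j) := by
  classical
  rcases hS with ⟨qS, hqS, hqS2, hqS1⟩
  rcases hT with ⟨qT, hqT, hqT2, hqT1⟩
  obtain ⟨pS, hpS, hpSmin⟩ := Finset.exists_min_image (S.filter (fun q => q.2 = j)) Prod.fst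
    ⟨qS, Finset.mem_filter.2 ⟨hqS, hqS2⟩⟩
  obtain ⟨pT, hpT, hpTmin⟩ := Finset.exists_min_image (T.filter (fun q => q.2 = j)) Prod.fst
    ⟨qT, Finset.mem_filter.2 ⟨hqT, hqT2⟩⟩
  rcases Finset.mem_filter.1 hpS with ⟨hpSX, hpS2⟩
  rcases Finset.mem_filter.1 hpT with ⟨hpTX, hpT2⟩
  have hSa : pS.1 ≤ a := le_trans (hpSmin qS (Finset.mem_filter.2 ⟨hqS, hqS2⟩)) hqS1
  have hTa : pT.1 ≤ a := le_trans (hpTmin qT (Finset.mem_filter.2 ⟨hqT, hqT2⟩)) hqT1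
  rcases le_total pS.1 pT.1 with hle | hle
  · refine ⟨pT.1, hTa, ?_, ⟨pS, hpSX, by omega⟩, ⟨pT, hpTX, hpT2, le_rfl⟩⟩
    right
    have : (pT.1, j) = pT := Prod.ext rfl hpT2.symm
    rw [this]
    exact ⟨hpTX, fun q hq hq2 => hpTmin q (Finset.mem_filter.2 ⟨hq, by omega⟩)⟩
  · refine ⟨pS.1, hSa, ?_, ⟨pS, hpSX, hpS2, le_rfl⟩, ⟨pT, hpTX, by omega⟩⟩
    left
    have : (pS.1, j) = pS := Prod.ext rfl hpS2.symm
    rw [this]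
    exact ⟨hpSX, fun q hq hq2 => hpSmin q (Finset.mem_filter.2 ⟨hq, by omega⟩)⟩

lemma gamma_top {n : ℕ} {S T : Finset (ℕ × ℕ)} (hS1 : (1, n) ∈ S) (hT1 : (1, n) ∈ T)
    (hSsub : S ⊆ indexSet n) (hTsub : T ⊆ indexSet n) : GammaPt S T (1, n) := by
  refine ⟨Or.inl ⟨hS1, fun q hq _ => (mem_indexSet.1 (hSsub hq)).1⟩,
    ⟨(1, n), hS1, rfl, le_rfl⟩, ⟨(1, n), hT1, rfl, le_rfl⟩⟩

lemma n_mem_DSet {n : ℕ} {S T : Finset (ℕ × ℕ)} {i : ℕ}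
    (hS1 : (1, n) ∈ S) (hT1 : (1, n) ∈ T)
    (hSsub : S ⊆ indexSet n) (hTsub : T ⊆ indexSet n)
    (hi2 : 2 ≤ i) (hin : i ≤ n) : n ∈ DSet n S T i := by
  have hgt := gamma_top hS1 hT1 hSsub hTsub
  refine mem_DSet.2 ⟨⟨by omega, le_rfl⟩, ⟨1, hgt, by omega⟩, hin, ?_, ?_, ?_⟩
  · intro q hq _; exact (mem_indexSet.1 (hSsub hq)).2.2
  · intro q hq _; exact (mem_indexSet.1 (hTsub hq)).2.2
  · intro j' hj'
    have hj'n : j' ≤ n := by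
      rcases gamma_mem_union hj' with h | h
      · exact (mem_indexSet.1 (hSsub h)).2.2
      · exact (mem_indexSet.1 (hTsub h)).2.2
    rcases Nat.lt_or_ge j' n with h | h
    · exact h
    · exfalso
      have : j' = n := by omega
      subst this
      have := gamma_unique hj' hgt rfl
      omega

/-- packaged: for a valid row index, there is a row point of the meet. -/
lemma exists_rowPt {n : ℕ} {S T : Finset (ℕ × ℕ)}
    (hS1 : (1, n) ∈ S) (hT1 : (1, n) ∈ T)
    (hSsub : S ⊆ indexSet n) (hTsub : T ⊆ indexSet n)
    {i : ℕ} (hi2 : 2 ≤ i) (hin : i ≤ n) (hng : ∀ k, ¬ GammaPt S T (k, i - 1)) :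
    ∃ m, m ∈ DSet n S T i ∧ (∀ j ∈ DSet n S T i, m ≤ j) ∧ (i, m) ∈ meetSet n S T := by
  classical
  have hne : (DSet n S T i).Nonempty := ⟨n, n_mem_DSet hS1 hT1 hSsub hTsub hi2 hin⟩
  refine ⟨(DSet n S T i).min' hne, (DSet n S T i).min'_mem hne,
    fun j hj => (DSet n S T i).min'_le j hj, ?_⟩
  have hmem := (DSet n S T i).min'_mem hne
  have hD := mem_DSet.1 hmem
  refine mem_meetSet.2 ⟨mem_indexSet.2 ⟨by omega, hD.2.2.1, hD.1.2⟩, Or.inr ?_⟩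
  exact ⟨hi2, hng, hmem, fun j hj => (DSet n S T i).min'_le j hj⟩

lemma meet_subset {n : ℕ} {S T : Finset (ℕ × ℕ)} : meetSet n S T ⊆ indexSet n := by
  classical
  exact Finset.filter_subset _ _

lemma gamma_mem_indexSet {n : ℕ} {S T : Finset (ℕ × ℕ)} {p : ℕ × ℕ}
    (hSsub : S ⊆ indexSet n) (hTsub : T ⊆ indexSet n) (h : GammaPt S T p) :
    p ∈ indexSet n := by
  rcases gamma_mem_union h with h' | h'
  · exact hSsub h'
  · exact hTsub h'

lemma no_gamma_of_row {n : ℕ} (hn : 0 < n) {S T : Finset (ℕ × ℕ)}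
    (hS : S ∈ fbn n) (hT : T ∈ fbn n) {i : ℕ} (hi2 : 2 ≤ i) (hin : i ≤ n)
    (hrow : (∃ p ∈ S, p.1 = i) ∨ (∃ p ∈ T, p.1 = i)) :
    ∀ k, ¬ GammaPt S T (k, i - 1) := by
  intro k hk
  rcases hrow with hr | hr
  · have hnc := ((fbn_struct hn hS).2 i hi2 hin).1 hr
    rcases hk.2.1 with ⟨q, hq, hq2, -⟩
    exact hnc ⟨q, hq, hq2⟩
  · have hnc := ((fbn_struct hn hT).2 i hi2 hin).1 hr
    rcases hk.2.2 with ⟨q, hq, hq2, -⟩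
    exact hnc ⟨q, hq, hq2⟩

lemma meet_isFB {n : ℕ} (hn : 0 < n) {S T : Finset (ℕ × ℕ)}
    (hS : S ∈ fbn n) (hT : T ∈ fbn n) : IsFB n (meetSet n S T) := by
  obtain ⟨hSsub, hSfb, hScard⟩ := mem_fbn.1 hS
  obtain ⟨hTsub, hTfb, hTcard⟩ := mem_fbn.1 hT
  have hS1 : (1, n) ∈ S := hSfb.1
  have hT1 : (1, n) ∈ T := hTfb.1
  have hgt := gamma_top hS1 hT1 hSsub hTsub
  have htopmem : (1, n) ∈ meetSet n S T :=
    mem_meetSet.2 ⟨mem_indexSet.2 ⟨le_rfl, hn, le_rfl⟩, Or.inl hgt⟩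
  refine ⟨htopmem, ?_, ?_⟩
  · -- condition 2
    intro p hp hpne
    rcases mem_meetSet.1 hp with ⟨hpi, hg | hr⟩
    · -- gamma point
      rcases Nat.lt_or_ge p.1 2 with h1 | h1
      · -- p.1 = 1, p.2 < n
        have hp1 : p.1 = 1 := by have := (mem_indexSet.1 hpi).1; omega
        have hp2 : p.2 < n := by
          have h2 := (mem_indexSet.1 hpi).2.2
          rcases Nat.lt_or_ge p.2 n with h | h
          · exact h
          · exact absurd (Prod.ext hp1 (by omega)) hpne
        refine ⟨(1, n), Finset.mem_inter.2 ⟨mem_cohook.2 ⟨⟨le_rfl, hn, hn, le_rfl⟩, ?_⟩, htopmem⟩⟩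
        right; exact ⟨hp1.symm, hp2⟩
      · -- p.1 ≥ 2 : use the row point of row p.1
        have hpin := mem_indexSet.1 hpi
        have hng : ∀ k, ¬ GammaPt S T (k, p.1 - 1) := by
          refine no_gamma_of_row hn hS hT h1 (by omega) ?_
          rcases gamma_mem_union hg with h' | h'
          · exact Or.inl ⟨p, h', rfl⟩
          · exact Or.inr ⟨p, h', rfl⟩
        obtain ⟨m, hmD, -, hmmem⟩ := exists_rowPt hS1 hT1 hSsub hTsub h1 (by omega) hng
        have hDm := mem_DSet.1 hmD
        have hlt : p.2 < m := hDm.2.2.2.2.2 p.2 (by exact hg)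
        refine ⟨(p.1, m), Finset.mem_inter.2 ⟨mem_cohook.2 ⟨⟨by omega, by omega, by omega, hDm.1.2⟩, ?_⟩, hmmem⟩⟩
        right; exact ⟨rfl, hlt⟩
    · -- row point: gamma point above in the same column
      rcases (mem_DSet.1 hr.2.2.1).2.1 with ⟨k, hk, hki⟩
      have hki' := mem_indexSet.1 (gamma_mem_indexSet hSsub hTsub hk)
      refine ⟨(k, p.2), Finset.mem_inter.2 ⟨mem_cohook.2 ⟨⟨by simpa using hki'.1, ?_, ?_, ?_⟩, ?_⟩, ?_⟩⟩
      · simp only at hki' ⊢; omega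
      · have := (mem_indexSet.1 (meet_subset hp)).1
        have := (mem_indexSet.1 (meet_subset hp)).2.1
        omega
      · exact (mem_indexSet.1 (meet_subset hp)).2.2
      · left; exact ⟨rfl, hki⟩
      · exact mem_meetSet.2 ⟨gamma_mem_indexSet hSsub hTsub hk, Or.inl hk⟩
  · -- condition 3
    intro k hk
    rw [Finset.mem_Icc] at hk
    by_cases hg : ∃ kk, GammaPt S T (kk, k - 1)
    · rcases hg with ⟨kk, hkk⟩
      have hki := mem_indexSet.1 (gamma_mem_indexSet hSsub hTsub hkk)
      simp only at hki
      refine ⟨(kk, k - 1), Finset.mem_inter.2 ⟨mem_cohook.2 ⟨⟨by omega, by omega, by omega, by omega⟩, ?_⟩, ?_⟩⟩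
      · left; exact ⟨rfl, by omega⟩
      · exact mem_meetSet.2 ⟨gamma_mem_indexSet hSsub hTsub hkk, Or.inl hkk⟩
    · obtain ⟨m, hmD, -, hmmem⟩ := exists_rowPt hS1 hT1 hSsub hTsub hk.1 hk.2
        (fun kk h => hg ⟨kk, h⟩)
      have hDm := mem_DSet.1 hmD
      refine ⟨(k, m), Finset.mem_inter.2 ⟨mem_cohook.2 ⟨⟨by omega, by omega, by omega, hDm.1.2⟩, ?_⟩, hmmem⟩⟩
      right; exact ⟨rfl, by omega⟩

lemma meet_card {n : ℕ} (hn : 0 < n) {S T : Finset (ℕ × ℕ)}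
    (hS : S ∈ fbn n) (hT : T ∈ fbn n) : (meetSet n S T).card = n := by
  classical
  obtain ⟨hSsub, hSfb, hScard⟩ := mem_fbn.1 hS
  obtain ⟨hTsub, hTfb, hTcard⟩ := mem_fbn.1 hT
  have hS1 : (1, n) ∈ S := hSfb.1
  have hT1 : (1, n) ∈ T := hTfb.1
  have hgt := gamma_top hS1 hT1 hSsub hTsub
  set Gpart := (indexSet n).filter (fun p => GammaPt S T p) with hGdef
  set Rpart := (indexSet n).filter (fun p => RowPt n S T p) with hRdef
  have hsplit : meetSet n S T = Gpart ∪ Rpart := by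
    rw [hGdef, hRdef, ← Finset.filter_or]
    rfl
  have hdisj : Disjoint Gpart Rpart := by
    rw [Finset.disjoint_left]
    intro p hpG hpR
    rcases Finset.mem_filter.1 hpG with ⟨-, hg⟩
    rcases Finset.mem_filter.1 hpR with ⟨-, hr⟩
    have := (mem_DSet.1 hr.2.2.1).2.2.2.2.2 p.2 (by exact hg)
    omega
  set CC := (Finset.Icc 1 n).filter (fun j => ∃ k, GammaPt S T (k, j)) with hCCdef
  set RR := (Finset.Icc 2 n).filter (fun i => ∀ k, ¬ GammaPt S T (k, i - 1)) with hRRdef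
  -- card Gpart = card CC
  have hGim : Gpart.image Prod.snd = CC := by
    apply Finset.Subset.antisymm
    · intro j hj
      rcases Finset.mem_image.1 hj with ⟨p, hp, hpj⟩
      rcases Finset.mem_filter.1 hp with ⟨hpi, hg⟩
      have := mem_indexSet.1 hpi
      refine Finset.mem_filter.2 ⟨Finset.mem_Icc.2 ⟨by omega, by omega⟩, ⟨p.1, ?_⟩⟩
      subst hpj
      exact hg
    · intro j hj
      rcases Finset.mem_filter.1 hj with ⟨hjI, k, hk⟩
      refine Finset.mem_image.2 ⟨(k, j), Finset.mem_filter.2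
        ⟨gamma_mem_indexSet hSsub hTsub hk, hk⟩, rfl⟩
  have hGinj : Set.InjOn Prod.snd (Gpart : Set (ℕ × ℕ)) := by
    intro p hp q hq hpq
    rw [Finset.mem_coe, hGdef, Finset.mem_filter] at hp hq
    exact Prod.ext (gamma_unique hp.2 hq.2 hpq) hpq
  have hGcard : Gpart.card = CC.card := by
    rw [← hGim, Finset.card_image_of_injOn hGinj]
  -- card Rpart = card RR
  have hRim : Rpart.image Prod.fst = RR := by
    apply Finset.Subset.antisymm
    · intro i hi
      rcases Finset.mem_image.1 hi with ⟨p, hp, hpi⟩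
      rcases Finset.mem_filter.1 hp with ⟨hpI, hr⟩
      have h1 := mem_indexSet.1 hpI
      have h2 := hr.1
      refine Finset.mem_filter.2 ⟨Finset.mem_Icc.2 ⟨by omega, by omega⟩, ?_⟩
      rw [← hpi]; exact hr.2.1
    · intro i hi
      rcases Finset.mem_filter.1 hi with ⟨hiI, hng⟩
      rw [Finset.mem_Icc] at hiI
      obtain ⟨m, hmD, hmin, hmmem⟩ := exists_rowPt hS1 hT1 hSsub hTsub hiI.1 hiI.2 hng
      have : (i, m) ∈ Rpart := by
        rcases mem_meetSet.1 hmmem with ⟨hidx, hg | hr⟩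
        · exfalso
          have := (mem_DSet.1 hmD).2.2.2.2.2 m (by exact hg)
          omega
        · exact Finset.mem_filter.2 ⟨hidx, hr⟩
      exact Finset.mem_image.2 ⟨(i, m), this, rfl⟩
  have hRinj : Set.InjOn Prod.fst (Rpart : Set (ℕ × ℕ)) := by
    intro p hp q hq hpq
    rw [Finset.mem_coe, hRdef, Finset.mem_filter] at hp hq
    refine Prod.ext hpq (le_antisymm ?_ ?_)
    · exact hp.2.2.2.2 q.2 (by rw [hpq]; exact hq.2.2.2.1)
    · exact hq.2.2.2.2 p.2 (by rw [← hpq]; exact hp.2.2.2.1)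
  have hRcard : Rpart.card = RR.card := by
    rw [← hRim, Finset.card_image_of_injOn hRinj]
  -- card CC + card RR = n
  have hnCC : n ∈ CC :=
    Finset.mem_filter.2 ⟨Finset.mem_Icc.2 ⟨hn, le_rfl⟩, ⟨1, hgt⟩⟩
  set A := (Finset.Icc 2 n).filter (fun i => ∃ k, GammaPt S T (k, i - 1)) with hAdef
  have hsplit2 : A.card + RR.card = n - 1 := by
    have hAR : A ∪ RR = Finset.Icc 2 n := by
      apply Finset.Subset.antisymm
        (Finset.union_subset (Finset.filter_subset _ _) (Finset.filter_subset _ _))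
      intro i hi
      by_cases h : ∃ k, GammaPt S T (k, i - 1)
      · exact Finset.mem_union_left _ (Finset.mem_filter.2 ⟨hi, h⟩)
      · exact Finset.mem_union_right _ (Finset.mem_filter.2 ⟨hi, fun k hk => h ⟨k, hk⟩⟩)
    have hARdisj : Disjoint A RR := by
      rw [Finset.disjoint_left]
      intro i hiA hiR
      rcases (Finset.mem_filter.1 hiA).2 with ⟨k, hk⟩
      exact (Finset.mem_filter.1 hiR).2 k hk
    have := Finset.card_union_of_disjoint hARdisj
    rw [hAR, Nat.card_Icc] at this
    omega
  have hAeq : A = (CC.erase n).image (· + 1) := by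
    ext a
    constructor
    · intro ha
      rcases Finset.mem_filter.1 ha with ⟨haI, k, hk⟩
      rw [Finset.mem_Icc] at haI
      refine Finset.mem_image.2 ⟨a - 1, Finset.mem_erase.2 ⟨by omega,
        Finset.mem_filter.2 ⟨Finset.mem_Icc.2 ⟨by omega, by omega⟩, ⟨k, hk⟩⟩⟩, by omega⟩
    · intro ha
      rcases Finset.mem_image.1 ha with ⟨j, hj, rfl⟩
      rcases Finset.mem_erase.1 hj with ⟨hjn, hjCC⟩
      rcases Finset.mem_filter.1 hjCC with ⟨hjI, k, hk⟩
      rw [Finset.mem_Icc] at hjI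
      refine Finset.mem_filter.2 ⟨Finset.mem_Icc.2 ⟨by omega, by omega⟩, ⟨k, ?_⟩⟩
      rwa [show j + 1 - 1 = j from by omega]
  have hAcard : A.card = CC.card - 1 := by
    rw [hAeq, Finset.card_image_of_injective _ (fun a b h => by omega),
      Finset.card_erase_of_mem hnCC]
  have hCCle : CC.card ≤ n := by
    have := Finset.card_le_card (Finset.filter_subset
      (fun j => ∃ k, GammaPt S T (k, j)) (Finset.Icc 1 n))
    rw [← hCCdef] at this
    rw [Nat.card_Icc] at this
    omega
  have hCCpos : 1 ≤ CC.card := Finset.card_pos.2 ⟨n, hnCC⟩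
  rw [hsplit, Finset.card_union_of_disjoint hdisj, hGcard, hRcard]
  omega

lemma meet_le {n : ℕ} (hn : 0 < n) {S T : Finset (ℕ × ℕ)}
    (hS : S ∈ fbn n) (hT : T ∈ fbn n) :
    fbLE n (meetSet n S T) S ∧ fbLE n (meetSet n S T) T := by
  obtain ⟨hSsub, hSfb, hScard⟩ := mem_fbn.1 hS
  obtain ⟨hTsub, hTfb, hTcard⟩ := mem_fbn.1 hT
  have hS1 : (1, n) ∈ S := hSfb.1
  have hT1 : (1, n) ∈ T := hTfb.1
  have hgt := gamma_top hS1 hT1 hSsub hTsub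
  have htopmem : (1, n) ∈ meetSet n S T :=
    mem_meetSet.2 ⟨mem_indexSet.2 ⟨le_rfl, hn, le_rfl⟩, Or.inl hgt⟩
  -- cogen of meet is below both
  have hcog : ∀ p ∈ meetSet n S T,
      (∃ q ∈ S, q.2 = p.2 ∧ q.1 ≤ p.1) ∧ (∃ q ∈ T, q.2 = p.2 ∧ q.1 ≤ p.1) := by
    intro p hp
    rcases mem_meetSet.1 hp with ⟨hpi, hg | hr⟩
    · exact ⟨hg.2.1, hg.2.2⟩
    · rcases (mem_DSet.1 hr.2.2.1).2.1 with ⟨k, hk, hki⟩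
      rcases hk.2.1 with ⟨qS, hqS, hqS2, hqS1⟩
      rcases hk.2.2 with ⟨qT, hqT, hqT2, hqT1⟩
      exact ⟨⟨qS, hqS, hqS2, by omega⟩, ⟨qT, hqT, hqT2, by omega⟩⟩
  -- gen of both is below gen of meet
  have hgen : ∀ (U : Finset (ℕ × ℕ)), U = S ∨ U = T →
      ∀ p ∈ U, ∃ q ∈ meetSet n S T, q.1 = p.1 ∧ p.2 ≤ q.2 := by
    intro U hU p hp
    have hUsub : U ⊆ indexSet n := by rcases hU with rfl | rfl <;> assumption
    have hpin := mem_indexSet.1 (hUsub hp)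
    rcases Nat.lt_or_ge p.1 2 with h1 | h1
    · refine ⟨(1, n), htopmem, by simp; omega, by simpa using hpin.2.2⟩
    · have hng : ∀ k, ¬ GammaPt S T (k, p.1 - 1) := by
        refine no_gamma_of_row hn hS hT h1 (by omega) ?_
        rcases hU with rfl | rfl
        · exact Or.inl ⟨p, hp, rfl⟩
        · exact Or.inr ⟨p, hp, rfl⟩
      obtain ⟨m, hmD, -, hmmem⟩ := exists_rowPt hS1 hT1 hSsub hTsub h1 (by omega) hng
      have hDm := mem_DSet.1 hmD
      refine ⟨(p.1, m), hmmem, rfl, ?_⟩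
      rcases hU with rfl | rfl
      · exact hDm.2.2.2.1 p hp rfl
      · exact hDm.2.2.2.2.1 p hp rfl
  constructor
  · refine (fbLE_iff meet_subset hSsub).2 ⟨fun p hp => (hcog p hp).1, hgen S (Or.inl rfl)⟩
  · refine (fbLE_iff meet_subset hTsub).2 ⟨fun p hp => (hcog p hp).2, hgen T (Or.inr rfl)⟩

lemma meet_glb {n : ℕ} (hn : 0 < n) {S T L : Finset (ℕ × ℕ)}
    (hS : S ∈ fbn n) (hT : T ∈ fbn n) (hL : L ∈ fbn n)
    (hLS : fbLE n L S) (hLT : fbLE n L T) : fbLE n L (meetSet n S T) := by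
  classical
  obtain ⟨hSsub, hSfb, hScard⟩ := mem_fbn.1 hS
  obtain ⟨hTsub, hTfb, hTcard⟩ := mem_fbn.1 hT
  obtain ⟨hLsub, hLfb, hLcard⟩ := mem_fbn.1 hL
  obtain ⟨hcoS, hgenS⟩ := (fbLE_iff hLsub hSsub).1 hLS
  obtain ⟨hcoT, hgenT⟩ := (fbLE_iff hLsub hTsub).1 hLT
  refine (fbLE_iff hLsub meet_subset).2 ⟨?_, ?_⟩
  · -- cogen L ⊆ cogen meet
    intro p hp
    rcases hcoS p hp with ⟨qS, hqS, hqS2, hqS1⟩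
    rcases hcoT p hp with ⟨qT, hqT, hqT2, hqT1⟩
    obtain ⟨k, hka, hk⟩ := gamma_exists (j := p.2) (a := p.1)
      ⟨qS, hqS, hqS2, hqS1⟩ ⟨qT, hqT, hqT2, hqT1⟩
    exact ⟨(k, p.2), mem_meetSet.2 ⟨gamma_mem_indexSet hSsub hTsub hk, Or.inl hk⟩, rfl, hka⟩
  · -- gen meet ⊆ gen L
    intro p hp
    rcases mem_meetSet.1 hp with ⟨hpi, hg | hr⟩
    · rcases gamma_mem_union hg with h' | h'
      · exact hgenS p h'
      · exact hgenT p h'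
    · -- row point
      have hpin := mem_indexSet.1 hpi
      have hi2 : 2 ≤ p.1 := hr.1
      have hin : p.1 ≤ n := by omega
      -- column p.1 - 1 of L is empty
      have hLcol : ¬ ∃ q ∈ L, q.2 = p.1 - 1 := by
        rintro ⟨q, hq, hq2⟩
        rcases hcoS q hq with ⟨qS, hqS, hqS2, hqS1⟩
        rcases hcoT q hq with ⟨qT, hqT, hqT2, hqT1⟩
        obtain ⟨k, -, hk⟩ := gamma_exists (j := p.1 - 1) (a := q.1)
          ⟨qS, hqS, by omega, hqS1⟩ ⟨qT, hqT, by omega, hqT1⟩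
        exact hr.2.1 k hk
      have hLrow : ∃ q ∈ L, q.1 = p.1 :=
        ((fbn_struct hn hL).2 p.1 hi2 hin).2 hLcol
      rcases hLrow with ⟨pL, hpL, hpL1⟩
      obtain ⟨b, hb, hbmax⟩ := Finset.exists_max_image (L.filter (fun q => q.1 = p.1))
        Prod.snd ⟨pL, Finset.mem_filter.2 ⟨hpL, hpL1⟩⟩
      rcases Finset.mem_filter.1 hb with ⟨hbL, hb1⟩
      have hbin := mem_indexSet.1 (hLsub hbL)
      -- b is not (1,n)
      have hbne : b ≠ (1, n) := fun h => by rw [h] at hb1; simp at hb1; omega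
      -- cohook of b gives a gamma point strictly above in column b.2
      obtain ⟨w, hw⟩ := hLfb.2.1 b hbL hbne
      rcases Finset.mem_inter.1 hw with ⟨hwc, hwL⟩
      have hgam : ∃ k, GammaPt S T (k, b.2) ∧ k < p.1 := by
        rcases (mem_cohook.1 hwc).2 with ⟨h2, h1⟩ | ⟨h1, h2⟩
        · rcases hcoS w hwL with ⟨qS, hqS, hqS2, hqS1⟩
          rcases hcoT w hwL with ⟨qT, hqT, hqT2, hqT1⟩
          obtain ⟨k, hka, hk⟩ := gamma_exists (j := b.2) (a := w.1)
            ⟨qS, hqS, by omega, hqS1⟩ ⟨qT, hqT, by omega, hqT1⟩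
          exact ⟨k, hk, by omega⟩
        · exfalso
          have := hbmax w (Finset.mem_filter.2 ⟨hwL, by omega⟩)
          omega
      rcases hgam with ⟨k, hk, hki⟩
      -- b.2 belongs to DSet p.1
      have hbD : b.2 ∈ DSet n S T p.1 := by
        refine mem_DSet.2 ⟨⟨by omega, by omega⟩, ⟨k, hk, hki⟩, by omega, ?_, ?_, ?_⟩
        · intro q hq hq1
          rcases hgenS q hq with ⟨r, hr', hr1, hr2⟩
          have := hbmax r (Finset.mem_filter.2 ⟨hr', by omega⟩)
          omega
        · intro q hq hq1
          rcases hgenT q hq with ⟨r, hr', hr1, hr2⟩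
          have := hbmax r (Finset.mem_filter.2 ⟨hr', by omega⟩)
          omega
        · intro j' hj'
          have hle : j' ≤ b.2 := by
            rcases gamma_mem_union hj' with h' | h'
            · rcases hgenS _ h' with ⟨r, hr', hr1, hr2⟩
              have := hbmax r (Finset.mem_filter.2 ⟨hr', by simpa using hr1⟩)
              simp only at hr2
              omega
            · rcases hgenT _ h' with ⟨r, hr', hr1, hr2⟩
              have := hbmax r (Finset.mem_filter.2 ⟨hr', by simpa using hr1⟩)
              simp only at hr2
              omega
          rcases Nat.lt_or_ge j' b.2 with h | h
          · exact h
          · exfalso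
            have hj'b : j' = b.2 := by omega
            subst hj'b
            have := gamma_unique hj' hk rfl
            simp only at this
            omega
      have hple : p.2 ≤ b.2 := hr.2.2.2 b.2 hbD
      exact ⟨b, hbL, hb1, hple⟩

/-- `(fb(n), ⊴)` is a finite lattice: the relation `⊴` is antisymmetric on `fb(n)`,
the projectives `{(i,n) : 1 ≤ i ≤ n}` form the least element, the injectives
`{(1,j) : 1 ≤ j ≤ n}` form the greatest element, and any two elements have a meet. -/
theorem fbn_lattice (n : ℕ) (hn : 0 < n) :
    (∀ S ∈ fbn n, ∀ T ∈ fbn n, fbLE n S T → fbLE n T S → S = T) ∧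
    ((indexSet n).filter (fun p => p.2 = n) ∈ fbn n ∧
      ∀ S ∈ fbn n, fbLE n ((indexSet n).filter (fun p => p.2 = n)) S) ∧
    ((indexSet n).filter (fun p => p.1 = 1) ∈ fbn n ∧
      ∀ S ∈ fbn n, fbLE n S ((indexSet n).filter (fun p => p.1 = 1))) ∧
    (∀ S ∈ fbn n, ∀ T ∈ fbn n, ∃ L ∈ fbn n, fbLE n L S ∧ fbLE n L T ∧
      ∀ L' ∈ fbn n, fbLE n L' S → fbLE n L' T → fbLE n L' L) := by
  refine ⟨fun S hS T hT h1 h2 => fbn_antisymm hn hS hT h1 h2,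
    ⟨proj_mem_fbn hn, fun S hS => proj_le hn hS⟩,
    ⟨inj_mem_fbn hn, fun S hS => inj_ge hn hS⟩,
    fun S hS T hT => ⟨meetSet n S T, ?_, (meet_le hn hS hT).1, (meet_le hn hS hT).2,
      fun L' hL' h1 h2 => meet_glb hn hS hT hL' h1 h2⟩⟩
  exact mem_fbn.2 ⟨meet_subset, meet_isFB hn hS hT, meet_card hn hS hT⟩
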